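/- arXiv:1706.05617 — 2 statements merged into one kernel-verified Lean document; each statement's English description precedes it below -/
import Mathlib

section
/- Let Λ be a constant Hamiltonian matrix with n distinct eigenvalues ν₁,…,νₙ and let R be an analytic quasi-periodic Hamiltonian matrix on D_ρ with basic frequencies ω and zero average, and assume the non-resonance conditions |i⟨k,ω⟩ − νᵢ + νⱼ| ≥ α/|k|^{3τ} for all k ∈ ℤʳ\{0}. Then the unique zero-average analytic quasi-periodic solution P(t) of Ṗ = ΛP − PΛ + R is itself a Hamiltonian matrix for every t, i.e., J⁻¹P(t) is symmetric: writing Λ = JΛ_J and R = JR_J with Λ_J, R_J symmetric and P_J = J⁻¹P, both JP_J and JP_Jᵀ are zero-average quasi-periodic solutions of the equation, hence P_J = P_Jᵀ by uniqueness. -/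
open scoped BigOperators
open Matrix

noncomputable section

/-- ℓ¹ norm of an integer vector. -/
def knorm {r : ℕ} (k : Fin r → ℤ) : ℝ := ∑ j, |(k j : ℝ)|

/-- The pairing `⟨k, ω⟩`. -/
def kdot {r : ℕ} (k : Fin r → ℤ) (ω : Fin r → ℝ) : ℝ := ∑ j, (k j : ℝ) * ω j

/-- `f` is an analytic quasi-periodic matrix-valued function on `D_ρ` with basic
frequencies `ω`, encoded by its Fourier expansion with coefficients `c`. -/
def HasQPFourier {ι : Type} [Fintype ι] {r : ℕ} (ω : Fin r → ℝ) (ρ : ℝ)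
    (f : ℝ → Matrix ι ι ℂ) (c : (Fin r → ℤ) → Matrix ι ι ℂ) : Prop :=
  (∀ i j, Summable fun k => ‖c k i j‖ * Real.exp (knorm k * ρ)) ∧
  ∀ t i j, f t i j = ∑' k, c k i j * Complex.exp (Complex.I * (kdot k ω) * t)

/-- The standard symplectic matrix `J`. -/
def stdJ (m : ℕ) : Matrix (Fin m ⊕ Fin m) (Fin m ⊕ Fin m) ℂ :=
  Matrix.fromBlocks 0 1 (-1) 0

/-- A matrix is Hamiltonian if `J⁻¹ M` is symmetric. -/
def IsHamiltonianMat {m : ℕ} (M : Matrix (Fin m ⊕ Fin m) (Fin m ⊕ Fin m) ℂ) : Prop :=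
  ((stdJ m)⁻¹ * M).IsSymm

/-- Swap the two blocks of the index type. -/
def sigm {m : ℕ} : (Fin m ⊕ Fin m) → (Fin m ⊕ Fin m) := Sum.elim Sum.inr Sum.inl

/-- Sign attached to each block. -/
def epsm {m : ℕ} : (Fin m ⊕ Fin m) → ℂ := Sum.elim (fun _ => 1) (fun _ => -1)

lemma stdJ_mul_stdJ (m : ℕ) : stdJ m * stdJ m = -1 := by
  simp [stdJ, Matrix.fromBlocks_multiply]
  ext i j
  rcases i with i | i <;> rcases j with j | j <;>
    simp [Matrix.fromBlocks, Matrix.one_apply, eq_comm]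

lemma stdJ_transpose (m : ℕ) : (stdJ m)ᵀ = -(stdJ m) := by
  ext i j
  rcases i with i | i <;> rcases j with j | j <;>
    simp [stdJ, Matrix.fromBlocks, Matrix.one_apply, eq_comm]

lemma stdJ_inv (m : ℕ) : (stdJ m)⁻¹ = -(stdJ m) := by
  apply Matrix.inv_eq_right_inv
  rw [mul_neg, stdJ_mul_stdJ]; simp

lemma mulJ_entry (m : ℕ) (X : Matrix (Fin m ⊕ Fin m) (Fin m ⊕ Fin m) ℂ) (i j) :
    (stdJ m * X) i j = epsm i * X (sigm i) j := by
  rcases i with i | i <;>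
    simp [stdJ, Matrix.mul_apply, Fintype.sum_sum_type, Matrix.fromBlocks,
      Matrix.one_apply, sigm, epsm, ite_mul]

lemma Jmul_entry (m : ℕ) (X : Matrix (Fin m ⊕ Fin m) (Fin m ⊕ Fin m) ℂ) (i j) :
    (X * stdJ m) i j = -(epsm j) * X i (sigm j) := by
  rcases j with j | j <;>
    simp [stdJ, Matrix.mul_apply, Fintype.sum_sum_type, Matrix.fromBlocks,
      Matrix.one_apply, sigm, epsm, mul_ite]

lemma entryJTJ (m : ℕ) (X : Matrix (Fin m ⊕ Fin m) (Fin m ⊕ Fin m) ℂ) (i j) :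
    (stdJ m * Xᵀ * stdJ m) i j = -(epsm i * epsm j) * X (sigm j) (sigm i) := by
  rw [Jmul_entry, mulJ_entry]
  simp only [Matrix.transpose_apply]
  ring

lemma abs_neg_eps {m : ℕ} (i j : Fin m ⊕ Fin m) :
    ‖-(epsm i * epsm j)‖ = 1 := by
  rcases i with i | i <;> rcases j with j | j <;> simp [epsm]

lemma ham_transpose {m : ℕ} {M : Matrix (Fin m ⊕ Fin m) (Fin m ⊕ Fin m) ℂ}
    (h : IsHamiltonianMat M) : Mᵀ = stdJ m * M * stdJ m := by
  have h1 : ((stdJ m)⁻¹ * M)ᵀ = (stdJ m)⁻¹ * M := h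
  rw [stdJ_inv, Matrix.transpose_mul, Matrix.transpose_neg, stdJ_transpose] at h1
  have h2 : Mᵀ * stdJ m = -(stdJ m * M) := by
    simpa [neg_mul] using h1
  have h3 := congrArg (fun A => A * stdJ m) h2
  simp only [Matrix.mul_assoc] at h3
  rw [stdJ_mul_stdJ] at h3
  simp only [mul_neg_one, neg_mul, neg_inj] at h3
  rw [h3, Matrix.mul_assoc]

lemma ham_of_conj {m : ℕ} {M : Matrix (Fin m ⊕ Fin m) (Fin m ⊕ Fin m) ℂ}
    (h : stdJ m * Mᵀ * stdJ m = M) : IsHamiltonianMat M := by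
  show ((stdJ m)⁻¹ * M)ᵀ = (stdJ m)⁻¹ * M
  rw [stdJ_inv]
  rw [Matrix.transpose_mul, Matrix.transpose_neg, stdJ_transpose, neg_neg]
  have h2 := congrArg (fun A => stdJ m * A) h.symm
  rw [show stdJ m * (stdJ m * Mᵀ * stdJ m) = (stdJ m * stdJ m) * (Mᵀ * stdJ m) by
    noncomm_ring, stdJ_mul_stdJ] at h2
  simp only [neg_one_mul] at h2
  rw [neg_mul]
  exact neg_eq_iff_eq_neg.mp h2.symm

lemma conj_ring {S : Type*} [Ring S] (j x l s : S) (hjj : j * j = -1) :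
    j * (x * (j * l * j) - (j * l * j) * x + j * s * j) * j
      = l * (j * x * j) - (j * x * j) * l + s := by
  have h1 : j * (x * (j * l * j) - (j * l * j) * x + j * s * j) * j
      = (j * x * j) * l * (j * j) - (j * j) * (l * (j * x * j)) + (j * j) * s * (j * j) := by
    noncomm_ring
  rw [h1, hjj]
  noncomm_ring


/-- `ν` is the list of eigenvalues (with multiplicity) of `M`. -/
def HasEigs {ι : Type} [Fintype ι] [DecidableEq ι] (M : Matrix ι ι ℂ) (ν : ι → ℂ) : Prop :=
  M.charpoly = ∏ i, (Polynomial.X - Polynomial.C (ν i))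

/-- The unique zero-average analytic quasi-periodic solution `P` of
`Ṗ = ΛP − PΛ + R`, with `Λ` Hamiltonian with distinct eigenvalues and `R` analytic
quasi-periodic Hamiltonian with zero average satisfying the non-resonance conditions,
is itself a Hamiltonian matrix for every `t` (i.e. `J⁻¹P(t)` is symmetric). -/
theorem homological_solution_isHamiltonian
    (r m : ℕ) (hr : 0 < r) (hm : 0 < m)
    (ρ α τ : ℝ) (hρ : 0 < ρ) (hα : 0 < α)
    (ω : Fin r → ℝ)
    (Λ : Matrix (Fin m ⊕ Fin m) (Fin m ⊕ Fin m) ℂ)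
    (ν : (Fin m ⊕ Fin m) → ℂ)
    (hΛham : IsHamiltonianMat Λ)
    (hΛeig : HasEigs Λ ν) (hνinj : Function.Injective ν)
    (R : ℝ → Matrix (Fin m ⊕ Fin m) (Fin m ⊕ Fin m) ℂ)
    (cR : (Fin r → ℤ) → Matrix (Fin m ⊕ Fin m) (Fin m ⊕ Fin m) ℂ)
    (hRqp : HasQPFourier ω ρ R cR)
    (hRham : ∀ t, IsHamiltonianMat (R t))
    (hRavg : cR 0 = 0)
    (hNR : ∀ k : Fin r → ℤ, k ≠ 0 → ∀ i j,
      α / (knorm k) ^ (3 * τ) ≤ ‖Complex.I * (kdot k ω : ℂ) - ν i + ν j‖)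
    -- `P` is a zero-average analytic quasi-periodic solution …
    (P : ℝ → Matrix (Fin m ⊕ Fin m) (Fin m ⊕ Fin m) ℂ)
    (cP : (Fin r → ℤ) → Matrix (Fin m ⊕ Fin m) (Fin m ⊕ Fin m) ℂ)
    (hPqp : ∃ ρ' > (0 : ℝ), HasQPFourier ω ρ' P cP)
    (hPavg : cP 0 = 0)
    (hPode : ∀ t i j, HasDerivAt (fun u => P u i j) ((Λ * P t - P t * Λ + R t) i j) t)
    -- … and it is the unique such solution.
    (huniq : ∀ (P' : ℝ → Matrix (Fin m ⊕ Fin m) (Fin m ⊕ Fin m) ℂ)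
        (cP' : (Fin r → ℤ) → Matrix (Fin m ⊕ Fin m) (Fin m ⊕ Fin m) ℂ),
        (∃ ρ' > (0 : ℝ), HasQPFourier ω ρ' P' cP') → cP' 0 = 0 →
        (∀ t i j, HasDerivAt (fun u => P' u i j) ((Λ * P' t - P' t * Λ + R t) i j) t) →
        ∀ t, P' t = P t) :
    ∀ t, IsHamiltonianMat (P t) := by
  intro t
  set P' : ℝ → Matrix (Fin m ⊕ Fin m) (Fin m ⊕ Fin m) ℂ :=
    fun u => stdJ m * (P u)ᵀ * stdJ m with hP'def
  set cP' : (Fin r → ℤ) → Matrix (Fin m ⊕ Fin m) (Fin m ⊕ Fin m) ℂ :=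
    fun k => stdJ m * (cP k)ᵀ * stdJ m with hcP'def
  obtain ⟨ρ', hρ'pos, hsum, hser⟩ := hPqp
  have hΛT : Λᵀ = stdJ m * Λ * stdJ m := ham_transpose hΛham
  have hRT : ∀ u, (R u)ᵀ = stdJ m * R u * stdJ m := fun u => ham_transpose (hRham u)
  have hp : ∀ u i j, P' u i j = -(epsm i * epsm j) * P u (sigm j) (sigm i) := by
    intro u i j
    simp only [hP'def]
    exact entryJTJ m (P u) i j
  have hc : ∀ k i j, cP' k i j = -(epsm i * epsm j) * cP k (sigm j) (sigm i) := by
    intro k i j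
    simp only [hcP'def]
    exact entryJTJ m (cP k) i j
  have hmat : ∀ u, stdJ m * (Λ * P u - P u * Λ + R u)ᵀ * stdJ m
      = Λ * P' u - P' u * Λ + R u := by
    intro u
    rw [Matrix.transpose_add, Matrix.transpose_sub, Matrix.transpose_mul,
      Matrix.transpose_mul, hΛT, hRT u]
    exact conj_ring _ _ _ _ (stdJ_mul_stdJ m)
  have key : ∀ u, P' u = P u := by
    refine huniq P' cP' ⟨ρ', hρ'pos, ?_, ?_⟩ ?_ ?_
    · intro i j
      refine (hsum (sigm j) (sigm i)).congr fun k => ?_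
      rw [hc k i j, norm_mul, abs_neg_eps, one_mul]
    · intro u i j
      rw [hp u i j, hser u]
      rw [← tsum_mul_left]
      refine tsum_congr fun k => ?_
      rw [hc k i j]
      ring
    · simp only [hcP'def]
      rw [hPavg]
      simp
    · intro u i j
      have hval : (Λ * P' u - P' u * Λ + R u) i j
          = -(epsm i * epsm j) * ((Λ * P u - P u * Λ + R u) (sigm j) (sigm i)) := by
        rw [← hmat u]
        exact entryJTJ m _ i j
      have heq : (fun s => P' s i j) = fun s => -(epsm i * epsm j) * P s (sigm j) (sigm i) :=
        funext fun s => hp s i j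
      rw [heq, hval]
      exact (hPode u (sigm j) (sigm i)).const_mul _
  have hkt := key t
  simp only [hP'def] at hkt
  exact ham_of_conj hkt
end
end

section
/- Let ω ∈ ℝʳ and τ > 0 be such that Σ_{k∈ℤʳ\{0}} |k|^{−τ} < ∞, let α > 0, M > 0, δ > 0, and ε₀ > 0. For each k ∈ ℤʳ\{0}, let f_k : (0,ε₀) → ℝ be differentiable with |f_k′(ε)| ≥ δ for all ε, and suppose |f_k(ε)| ≥ α/|k|^τ − 3Mε₀ for all ε ∈ (0,ε₀). Then for every α′ with 0 < α′ ≤ α/2, the set ⋃_{k≠0} {ε ∈ (0,ε₀) : |f_k(ε)| < α′/|k|^{3τ}} has Lebesgue measure at most (2α′/δ)·(6Mε₀/α)²·Σ_{k∈ℤʳ\{0}} |k|^{−τ}. In particular: if |k|^{−τ} ≥ 6Mε₀/α then {ε : |f_k(ε)| < α′/|k|^{3τ}} is empty, and the total excluded measure is O(ε₀²) as ε₀ → 0. -/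
open scoped BigOperators
open MeasureTheory

noncomputable section

lemma knorm_nonneg {r : ℕ} (k : Fin r → ℤ) : 0 ≤ knorm k :=
  Finset.sum_nonneg fun _ _ => abs_nonneg _

lemma one_le_knorm {r : ℕ} {k : Fin r → ℤ} (hk : k ≠ 0) : 1 ≤ knorm k := by
  obtain ⟨j, hj⟩ := Function.ne_iff.mp hk
  have h1 : (1 : ℝ) ≤ |(k j : ℝ)| := by
    have : (1 : ℤ) ≤ |k j| := Int.one_le_abs (by simpa using hj)
    calc (1 : ℝ) ≤ ((|k j| : ℤ) : ℝ) := by exact_mod_cast this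
      _ = |(k j : ℝ)| := by push_cast; ring
  calc (1 : ℝ) ≤ |(k j : ℝ)| := h1
    _ ≤ ∑ i, |(k i : ℝ)| :=
      Finset.single_le_sum (f := fun i => |(k i : ℝ)|) (fun i _ => abs_nonneg _)
        (Finset.mem_univ j)

/-- Summability of `knorm^{-τ}` over nonzero vectors forces `τ > 1` (when `r ≥ 1`). -/
lemma tau_gt_one {r : ℕ} (i0 : Fin r) {τ : ℝ}
    (hsum : Summable fun k : {k : Fin r → ℤ // k ≠ 0} => (knorm k.1) ^ (-τ)) :
    1 < τ := by
  have heval : ∀ m : ℕ,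
      knorm (fun j => if j = i0 then (m : ℤ) + 1 else 0) = (m : ℝ) + 1 := by
    intro m
    unfold knorm
    rw [Finset.sum_eq_single_of_mem i0 (Finset.mem_univ i0)]
    · have hb : (fun j => if j = i0 then (m : ℤ) + 1 else 0) i0 = (m : ℤ) + 1 := by
        simp
      rw [hb]
      push_cast
      rw [abs_of_nonneg (by positivity)]
    · intro j _ hji
      simp [hji]
  have hinj : Function.Injective
      (fun m : ℕ => (⟨fun j => if j = i0 then (m : ℤ) + 1 else 0, by
        intro h
        have h2 : ((m : ℤ) + 1 : ℤ) = 0 := by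
          simpa using congrFun h i0
        omega⟩ : {k : Fin r → ℤ // k ≠ 0})) := by
    intro m m' h
    have h2 : (m : ℤ) + 1 = (m' : ℤ) + 1 := by
      simpa using congrFun (congrArg Subtype.val h) i0
    omega
  have hs : Summable fun m : ℕ => ((m : ℝ) + 1) ^ (-τ) :=
    (hsum.comp_injective hinj).congr fun m => by
      simp only [Function.comp_apply]
      rw [heval m]
  have hs' : Summable fun m : ℕ => ((m : ℝ)) ^ (-τ) := by
    apply (summable_nat_add_iff (f := fun m : ℕ => ((m : ℝ)) ^ (-τ)) 1).mp
    convert hs using 2 with m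
    push_cast
    · rfl
    · push_cast; ring
  have := Real.summable_nat_rpow.mp hs'
  linarith

/-- Measure of the set where a function with derivative of absolute value `≥ δ`
is smaller than `c` in absolute value. -/
lemma small_set_measure (f : ℝ → ℝ) (a b δ c : ℝ) (hδ : 0 < δ) (hc : 0 ≤ c)
    (hdiff : ∀ ε ∈ Set.Ioo a b, DifferentiableAt ℝ f ε)
    (hderiv : ∀ ε ∈ Set.Ioo a b, δ ≤ |deriv f ε|) :
    volume {ε ∈ Set.Ioo a b | |f ε| < c} ≤ ENNReal.ofReal (2 * c / δ) := by
  set S := {ε ∈ Set.Ioo a b | |f ε| < c} with hS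
  rcases S.eq_empty_or_nonempty with h | ⟨x0, hx0⟩
  · rw [h]; simp
  have key : ∀ x ∈ S, ∀ y ∈ S, y - x ≤ 2 * c / δ := by
    intro x hx y hy
    by_cases hxy : x < y
    · have hsub : Set.Icc x y ⊆ Set.Ioo a b := Set.Icc_subset_Ioo hx.1.1 hy.1.2
      have hcont : ContinuousOn f (Set.Icc x y) := fun z hz =>
        ((hdiff z (hsub hz)).continuousAt).continuousWithinAt
      have hdif : DifferentiableOn ℝ f (Set.Ioo x y) := fun z hz =>
        (hdiff z (hsub (Set.Ioo_subset_Icc_self hz))).differentiableWithinAt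
      obtain ⟨z, hz, hz'⟩ := exists_deriv_eq_slope f hxy hcont hdif
      have hzab : z ∈ Set.Ioo a b := hsub (Set.Ioo_subset_Icc_self hz)
      have h1 : δ * (y - x) ≤ |f y - f x| := by
        have h2 : δ ≤ |deriv f z| := hderiv z hzab
        have h3 : |deriv f z| * (y - x) = |f y - f x| := by
          rw [hz', abs_div, abs_of_pos (by linarith : (0:ℝ) < y - x),
            div_mul_cancel₀ _ (by linarith : y - x ≠ 0)]
        nlinarith [abs_nonneg (deriv f z)]
      have h4 : |f y - f x| ≤ |f y| + |f x| := abs_sub _ _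
      have h5 : δ * (y - x) < 2 * c := by
        have := hx.2; have := hy.2
        have hx2 : |f x| < c := hx.2
        have hy2 : |f y| < c := hy.2
        linarith
      rw [le_div_iff₀ hδ]; linarith
    · have h6 : y ≤ x := le_of_not_gt hxy
      have h7 : (0:ℝ) ≤ 2 * c / δ := by positivity
      linarith
  have hbdd : BddBelow S := ⟨a, fun z hz => le_of_lt hz.1.1⟩
  have hsub : S ⊆ Set.Icc (sInf S) (sInf S + 2 * c / δ) := by
    intro y hy
    refine ⟨csInf_le hbdd hy, ?_⟩
    have h1 : y - 2 * c / δ ≤ sInf S :=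
      le_csInf ⟨x0, hx0⟩ (fun x hx => by linarith [key x hx y hy])
    linarith
  calc volume S ≤ volume (Set.Icc (sInf S) (sInf S + 2 * c / δ)) :=
        measure_mono hsub
    _ = ENNReal.ofReal (2 * c / δ) := by rw [Real.volume_Icc]; ring_nf

/-- **Measure estimate for the resonant sets.** If each small divisor `f_k` has derivative
bounded below by `δ` and satisfies `|f_k(ε)| ≥ α/|k|^τ − 3Mε₀` on `(0,ε₀)`, then for
`0 < α′ ≤ α/2` the union of the resonant sets `{ε : |f_k(ε)| < α′/|k|^{3τ}}` has measure
at most `(2α′/δ)(6Mε₀/α)² Σ_{k≠0}|k|^{−τ}`; in particular each resonant set with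
`|k|^{−τ} ≥ 6Mε₀/α` is empty. -/
theorem resonant_sets_measure_estimate
    (r : ℕ) (τ α M δ ε₀ α' : ℝ) (ω : Fin r → ℝ)
    (hsum : Summable fun k : {k : Fin r → ℤ // k ≠ 0} => (knorm k.1) ^ (-τ))
    (hα : 0 < α) (hM : 0 < M) (hδ : 0 < δ) (hε₀ : 0 < ε₀)
    (hα' : 0 < α') (hα'le : α' ≤ α / 2)
    (f : (Fin r → ℤ) → ℝ → ℝ)
    (hdiff : ∀ k : Fin r → ℤ, k ≠ 0 → ∀ ε ∈ Set.Ioo (0 : ℝ) ε₀, DifferentiableAt ℝ (f k) ε)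
    (hderiv : ∀ k : Fin r → ℤ, k ≠ 0 → ∀ ε ∈ Set.Ioo (0 : ℝ) ε₀, δ ≤ |deriv (f k) ε|)
    (hlb : ∀ k : Fin r → ℤ, k ≠ 0 → ∀ ε ∈ Set.Ioo (0 : ℝ) ε₀,
      α / (knorm k) ^ τ - 3 * M * ε₀ ≤ |f k ε|) :
    (∀ k : Fin r → ℤ, k ≠ 0 → 6 * M * ε₀ / α ≤ (knorm k) ^ (-τ) →
      {ε ∈ Set.Ioo (0 : ℝ) ε₀ | |f k ε| < α' / (knorm k) ^ (3 * τ)} = ∅) ∧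
    volume (⋃ (k : Fin r → ℤ) (_ : k ≠ 0),
        {ε ∈ Set.Ioo (0 : ℝ) ε₀ | |f k ε| < α' / (knorm k) ^ (3 * τ)})
      ≤ ENNReal.ofReal ((2 * α' / δ) * (6 * M * ε₀ / α) ^ 2 *
          ∑' k : {k : Fin r → ℤ // k ≠ 0}, (knorm k.1) ^ (-τ)) := by
  -- Part 1: emptiness of resonant sets for small |k|
  have part1 : ∀ k : Fin r → ℤ, k ≠ 0 → 6 * M * ε₀ / α ≤ (knorm k) ^ (-τ) →
      {ε ∈ Set.Ioo (0 : ℝ) ε₀ | |f k ε| < α' / (knorm k) ^ (3 * τ)} = ∅ := by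
    intro k hk hbig
    obtain ⟨j, _⟩ := Function.ne_iff.mp hk
    have hτ : 1 < τ := tau_gt_one j hsum
    have hn : 1 ≤ knorm k := one_le_knorm hk
    have hn0 : 0 < knorm k := lt_of_lt_of_le one_pos hn
    have hτp : 0 < knorm k ^ τ := Real.rpow_pos_of_pos hn0 τ
    have h3τp : 0 < knorm k ^ (3 * τ) := Real.rpow_pos_of_pos hn0 _
    have hneg : knorm k ^ (-τ) = (knorm k ^ τ)⁻¹ := Real.rpow_neg (le_of_lt hn0) τ
    have h6 : 6 * M * ε₀ ≤ α / knorm k ^ τ := by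
      rw [hneg, div_le_iff₀ hα] at hbig
      calc 6 * M * ε₀ ≤ (knorm k ^ τ)⁻¹ * α := hbig
        _ = α / knorm k ^ τ := by rw [div_eq_inv_mul]
    ext ε
    simp only [Set.mem_setOf_eq, Set.mem_empty_iff_false, iff_false, not_and]
    intro hε hlt
    have hlow := hlb k hk ε hε
    have hmono : knorm k ^ τ ≤ knorm k ^ (3 * τ) :=
      Real.rpow_le_rpow_of_exponent_le hn (by linarith)
    have hcomp : α' / knorm k ^ (3 * τ) ≤ (α / 2) / knorm k ^ τ :=
      div_le_div₀ (by linarith) hα'le hτp hmono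
    have heq : (α / 2) / knorm k ^ τ = (α / knorm k ^ τ) / 2 := by ring
    linarith
  refine ⟨part1, ?_⟩
  set C : ℝ := (2 * α' / δ) * (6 * M * ε₀ / α) ^ 2 with hC
  have hC0 : 0 ≤ C := by positivity
  set R : (Fin r → ℤ) → Set ℝ :=
    fun k => {ε ∈ Set.Ioo (0 : ℝ) ε₀ | |f k ε| < α' / (knorm k) ^ (3 * τ)} with hR
  have key : ∀ k : {k : Fin r → ℤ // k ≠ 0},
      volume (R k.1) ≤ ENNReal.ofReal (C * (knorm k.1) ^ (-τ)) := by
    rintro ⟨k, hk⟩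
    by_cases hbig : 6 * M * ε₀ / α ≤ (knorm k) ^ (-τ)
    · simp only [hR]
      rw [part1 k hk hbig]
      simp
    · push_neg at hbig
      have hn : 1 ≤ knorm k := one_le_knorm hk
      have hn0 : 0 < knorm k := lt_of_lt_of_le one_pos hn
      have h3τp : 0 < knorm k ^ (3 * τ) := Real.rpow_pos_of_pos hn0 _
      have ht : 0 < knorm k ^ (-τ) := Real.rpow_pos_of_pos hn0 _
      have hcpos : 0 ≤ α' / knorm k ^ (3 * τ) := by positivity
      have hbound := small_set_measure (f k) 0 ε₀ δ (α' / knorm k ^ (3 * τ)) hδ hcpos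
        (hdiff k hk) (hderiv k hk)
      refine le_trans hbound (ENNReal.ofReal_le_ofReal ?_)
      -- rewrite α'/knorm^(3τ) = α' * (knorm^(-τ))^3
      have e1 : ((knorm k) ^ (-τ)) ^ (3 : ℕ) = (knorm k ^ (3 * τ))⁻¹ := by
        rw [← Real.rpow_natCast ((knorm k) ^ (-τ)) 3,
          ← Real.rpow_mul (knorm_nonneg k)]
        rw [show -τ * ((3 : ℕ) : ℝ) = -(3 * τ) by push_cast; ring]
        exact Real.rpow_neg (knorm_nonneg k) _
      have hcube : α' / knorm k ^ (3 * τ) = α' * ((knorm k) ^ (-τ)) ^ (3 : ℕ) := by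
        rw [e1, div_eq_mul_inv]
      have ht2 : ((knorm k) ^ (-τ)) ^ (2 : ℕ) ≤ (6 * M * ε₀ / α) ^ (2 : ℕ) :=
        pow_le_pow_left₀ ht.le hbig.le 2
      have step : (2 * α' / δ) * ((knorm k) ^ (-τ)) ^ (2 : ℕ) * ((knorm k) ^ (-τ))
          ≤ (2 * α' / δ) * (6 * M * ε₀ / α) ^ 2 * ((knorm k) ^ (-τ)) :=
        mul_le_mul_of_nonneg_right
          (mul_le_mul_of_nonneg_left ht2 (by positivity)) ht.le
      calc 2 * (α' / knorm k ^ (3 * τ)) / δ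
          = (2 * α' / δ) * ((knorm k) ^ (-τ)) ^ (2 : ℕ) * ((knorm k) ^ (-τ)) := by
            rw [hcube]; ring
        _ ≤ (2 * α' / δ) * (6 * M * ε₀ / α) ^ 2 * ((knorm k) ^ (-τ)) := step
        _ = C * (knorm k) ^ (-τ) := by rw [hC]
  calc volume (⋃ (k : Fin r → ℤ) (_ : k ≠ 0), R k)
      = volume (⋃ k : {k : Fin r → ℤ // k ≠ 0}, R k.1) := by
        congr 1
        ext x
        simp only [Set.mem_iUnion, Subtype.exists]
    _ ≤ ∑' k : {k : Fin r → ℤ // k ≠ 0}, volume (R k.1) := measure_iUnion_le _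
    _ ≤ ∑' k : {k : Fin r → ℤ // k ≠ 0}, ENNReal.ofReal (C * (knorm k.1) ^ (-τ)) :=
        ENNReal.tsum_le_tsum key
    _ = ENNReal.ofReal (∑' k : {k : Fin r → ℤ // k ≠ 0}, C * (knorm k.1) ^ (-τ)) :=
        (ENNReal.ofReal_tsum_of_nonneg
          (fun k => mul_nonneg hC0 (Real.rpow_nonneg (knorm_nonneg _) _))
          (hsum.mul_left C)).symm
    _ = ENNReal.ofReal (C * ∑' k : {k : Fin r → ℤ // k ≠ 0}, (knorm k.1) ^ (-τ)) := by
        rw [tsum_mul_left]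
end
end
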